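/- (Fact 3, Stage 1.2) Under the hypotheses of Lemma 1 and assuming 1/√(n log n) ≤ α_0 ≤ (log n)/√n and 1 − 1/log n ≤ β_0 ≤ 1 + 1/log n, let T₁ := min{t : α_{t+1} > c₄} and T₂ := min{t : α_{t+1}/β_{t+1} > 2/γ}. Suppose η > 0 is a sufficiently small constant. Then for every t with T₁ < t ≤ T₂: α_t² + β_t² ≤ 2; (α_{t+1}/β_{t+1})/(α_t/β_t) ≥ 1 + η; α_{t+1} ≥ (1 − 3.1η) α_t; and β_{t+1} ≥ (1 − 5.1η) β_t. In addition, T₂ − T₁ ≲ 1/η. -/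

import Mathlib

/-!
While `α_t² + β_t² ≤ 3/2`, both multipliers of the state evolution stay positive and the
`α`-multiplier beats the `β`-multiplier by a factor `1 + η`, because they differ by
`2η + η(ζ_t − ρ_t)`. The bound `3/2` is itself invariant: the multipliers are at most
`1 + 3η(1 − s) + η/100`, which is `≤ 1` once `s > 1.01` and only slightly above `1` below that.
Hence `α_t/β_t` grows geometrically; it exceeds `c₄/2` right after `T₁` (as `β_t ≤ 2`) and
is at most `2/γ` at `T₂`, so Bernoulli's inequality bounds `T₂ − T₁` by `4/(γ c₄ η)`.
-/

open Filter Real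

noncomputable section

namespace PR

/-- The approximate state evolution for the signal strength `α` and the orthogonal-component
strength `β`, with stepsize `η` and perturbation sequences `ζ`, `ρ`. -/
def stateEvo (η : ℝ) (α β ζ ρ : ℕ → ℝ) : Prop :=
  ∀ t : ℕ,
    α (t + 1) = (1 + 3 * η * (1 - (α t ^ 2 + β t ^ 2)) + η * ζ t) * α t ∧
    β (t + 1) = (1 + η * (1 - 3 * (α t ^ 2 + β t ^ 2)) + η * ρ t) * β t

end PR

lemma sq_add_sq_le_sq_mul {a b M x y : ℝ} (ha : 0 ≤ a) (haM : a ≤ M) (hb : 0 ≤ b)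
    (hbM : b ≤ M) : (a * x) ^ 2 + (b * y) ^ 2 ≤ M ^ 2 * (x ^ 2 + y ^ 2) := by
  have ha2 := mul_le_mul_of_nonneg_right (pow_le_pow_left₀ ha haM 2) (sq_nonneg x)
  have hb2 := mul_le_mul_of_nonneg_right (pow_le_pow_left₀ hb hbM 2) (sq_nonneg y)
  linarith [show (a * x) ^ 2 + (b * y) ^ 2 = a ^ 2 * x ^ 2 + b ^ 2 * y ^ 2 by ring]

lemma pow_mul_le_of_forall_mul_le {r : ℕ → ℝ} {c : ℝ} (hc : 0 ≤ c)
    (hr : ∀ t, c * r t ≤ r (t + 1)) (t : ℕ) : ∀ k : ℕ, c ^ k * r t ≤ r (t + k)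
  | 0 => by simp
  | k + 1 =>
    calc c ^ (k + 1) * r t = c * (c ^ k * r t) := by ring
      _ ≤ c * r (t + k) := mul_le_mul_of_nonneg_left (pow_mul_le_of_forall_mul_le hc hr t k) hc
      _ ≤ r (t + (k + 1)) := hr (t + k)

lemma sub_le_div_of_one_add_mul_le {r : ℕ → ℝ} {η a b : ℝ} (hη₀ : 0 < η) (hη : η ≤ 1)
    (ha : 0 < a) (hb : 0 ≤ b) (hr : ∀ t, (1 + η) * r t ≤ r (t + 1)) {t₁ t₂ : ℕ}
    (h₁ : a ≤ r (t₁ + 1)) (h₂ : ∀ t < t₂, r (t + 1) ≤ b) :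
    (t₂ : ℝ) - t₁ ≤ b / a / η := by
  rcases le_or_gt t₂ t₁ with hle | hlt
  · have : (t₂ : ℝ) ≤ t₁ := by exact_mod_cast hle
    have : 0 ≤ b / a / η := by positivity
    linarith
  obtain ⟨k, rfl⟩ := Nat.exists_eq_add_of_lt hlt
  have hgrowth : (1 + k * η) * a ≤ b :=
    calc (1 + k * η) * a ≤ (1 + η) ^ k * r (t₁ + 1) :=
          mul_le_mul (one_add_mul_le_pow (by linarith) k) h₁ ha.le (by positivity)
      _ ≤ r (t₁ + 1 + k) := pow_mul_le_of_forall_mul_le (by linarith) hr (t₁ + 1) k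
      _ ≤ b := by simpa only [add_right_comm] using h₂ (t₁ + k) (by omega)
  rw [div_div, le_div_iff₀ (by positivity)]
  push_cast
  nlinarith

lemma eventually_log_bounds :
    ∀ᶠ n : ℕ in atTop, 100 ≤ log n ∧ log n / √n ≤ 1 / 2 := by
  have hlog : Tendsto (fun x : ℝ => log x / √x) atTop (nhds 0) := by
    simpa only [sqrt_eq_rpow] using (isLittleO_log_rpow_atTop one_half_pos).tendsto_div_nhds_zero
  have hnat := tendsto_natCast_atTop_atTop (R := ℝ)
  exact ((tendsto_log_atTop.comp hnat).eventually_ge_atTop 100).and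
    ((hlog.comp hnat).eventually (Iic_mem_nhds one_half_pos))

namespace PR

def alphaFactor (η s z : ℝ) : ℝ := 1 + 3 * η * (1 - s) + η * z

def betaFactor (η s r : ℝ) : ℝ := 1 + η * (1 - 3 * s) + η * r

section Factors

variable {η s z r : ℝ}

lemma one_sub_le_alphaFactor (hη : 0 ≤ η) (hs : s ≤ 3 / 2) (hz : |z| ≤ 1 / 100) :
    1 - 3.1 * η ≤ alphaFactor η s z := by
  have := neg_le_of_abs_le hz
  unfold alphaFactor
  nlinarith

lemma one_sub_le_betaFactor (hη : 0 ≤ η) (hs : s ≤ 3 / 2) (hr : |r| ≤ 1 / 100) :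
    1 - 5.1 * η ≤ betaFactor η s r := by
  have := neg_le_of_abs_le hr
  unfold betaFactor
  nlinarith

lemma alphaFactor_le_alphaFactor (hη : 0 ≤ η) (hz : z ≤ 1 / 100) :
    alphaFactor η s z ≤ alphaFactor η s (1 / 100) := by
  unfold alphaFactor
  nlinarith

lemma betaFactor_le_alphaFactor (hη : 0 ≤ η) (hr : r ≤ 1 / 100) :
    betaFactor η s r ≤ alphaFactor η s (1 / 100) := by
  unfold alphaFactor betaFactor
  nlinarith

lemma one_add_mul_betaFactor_le_alphaFactor (hη₀ : 0 ≤ η) (hη : η ≤ 1 / 100) (hs : 0 ≤ s)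
    (hz : |z| ≤ 1 / 100) (hr : |r| ≤ 1 / 100) :
    (1 + η) * betaFactor η s r ≤ alphaFactor η s z := by
  have := neg_le_of_abs_le hz
  have := le_of_abs_le hr
  unfold alphaFactor betaFactor
  nlinarith [mul_nonneg hη₀ hs, mul_nonneg (mul_nonneg hη₀ hη₀) hs]

lemma alphaFactor_pos (hη₀ : 0 ≤ η) (hη : η ≤ 1 / 100) (hs : s ≤ 3 / 2) (hz : |z| ≤ 1 / 100) :
    0 < alphaFactor η s z := by
  linarith [one_sub_le_alphaFactor hη₀ hs hz]

lemma betaFactor_pos (hη₀ : 0 ≤ η) (hη : η ≤ 1 / 100) (hs : s ≤ 3 / 2) (hr : |r| ≤ 1 / 100) :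
    0 < betaFactor η s r := by
  linarith [one_sub_le_betaFactor hη₀ hs hr]

lemma sq_alphaFactor_mul_le (hη₀ : 0 ≤ η) (hη : η ≤ 1 / 100) (hs₀ : 0 ≤ s) (hs : s ≤ 3 / 2) :
    alphaFactor η s (1 / 100) ^ 2 * s ≤ 3 / 2 := by
  have hpos := (alphaFactor_pos hη₀ hη hs (by norm_num : |(1 / 100 : ℝ)| ≤ 1 / 100)).le
  rcases le_or_gt s (101 / 100) with hsmall | hlarge
  · have hM : alphaFactor η s (1 / 100) ≤ 10301 / 10000 := by
      unfold alphaFactor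
      nlinarith
    calc alphaFactor η s (1 / 100) ^ 2 * s ≤ (10301 / 10000) ^ 2 * (101 / 100) := by gcongr
      _ ≤ 3 / 2 := by norm_num
  · have hM : alphaFactor η s (1 / 100) ≤ 1 := by
      unfold alphaFactor
      nlinarith
    calc alphaFactor η s (1 / 100) ^ 2 * s ≤ 1 ^ 2 * s := by gcongr
      _ ≤ 3 / 2 := by linarith

end Factors

section Evolution

variable {η : ℝ} {α β ζ ρ : ℕ → ℝ}

lemma stateEvo.alpha_succ (h : stateEvo η α β ζ ρ) (t : ℕ) :
    α (t + 1) = alphaFactor η (α t ^ 2 + β t ^ 2) (ζ t) * α t :=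
  (h t).1

lemma stateEvo.beta_succ (h : stateEvo η α β ζ ρ) (t : ℕ) :
    β (t + 1) = betaFactor η (α t ^ 2 + β t ^ 2) (ρ t) * β t :=
  (h t).2

lemma stateEvo.invariant (h : stateEvo η α β ζ ρ) (hη₀ : 0 ≤ η) (hη : η ≤ 1 / 100)
    (hζ : ∀ t, |ζ t| ≤ 1 / 100) (hρ : ∀ t, |ρ t| ≤ 1 / 100)
    (hα : 0 < α 0) (hβ : 0 < β 0) (hs : α 0 ^ 2 + β 0 ^ 2 ≤ 3 / 2) :
    ∀ t, 0 < α t ∧ 0 < β t ∧ α t ^ 2 + β t ^ 2 ≤ 3 / 2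
  | 0 => ⟨hα, hβ, hs⟩
  | t + 1 => by
    obtain ⟨hα, hβ, hs⟩ := h.invariant hη₀ hη hζ hρ hα hβ hs t
    have ha := alphaFactor_pos hη₀ hη hs (hζ t)
    have hb := betaFactor_pos hη₀ hη hs (hρ t)
    rw [h.alpha_succ, h.beta_succ]
    refine ⟨mul_pos ha hα, mul_pos hb hβ, ?_⟩
    calc _ ≤ alphaFactor η (α t ^ 2 + β t ^ 2) (1 / 100) ^ 2 * (α t ^ 2 + β t ^ 2) :=
          sq_add_sq_le_sq_mul ha.le (alphaFactor_le_alphaFactor hη₀ (le_of_abs_le (hζ t)))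
            hb.le (betaFactor_le_alphaFactor hη₀ (le_of_abs_le (hρ t)))
      _ ≤ 3 / 2 := sq_alphaFactor_mul_le hη₀ hη (by positivity) hs

lemma stateEvo.one_add_mul_ratio_le (h : stateEvo η α β ζ ρ) (hη₀ : 0 ≤ η) (hη : η ≤ 1 / 100)
    {t : ℕ} (hζ : |ζ t| ≤ 1 / 100) (hρ : |ρ t| ≤ 1 / 100) (hα : 0 ≤ α t) (hβ : 0 < β t)
    (hs : α t ^ 2 + β t ^ 2 ≤ 3 / 2) :
    (1 + η) * (α t / β t) ≤ α (t + 1) / β (t + 1) := by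
  have hb := betaFactor_pos hη₀ hη hs hρ
  rw [h.alpha_succ, h.beta_succ, mul_div_mul_comm]
  gcongr
  rw [le_div_iff₀ hb]
  exact one_add_mul_betaFactor_le_alphaFactor hη₀ hη (by positivity) hζ hρ

lemma stateEvo.alpha_succ_ge (h : stateEvo η α β ζ ρ) (hη : 0 ≤ η) {t : ℕ}
    (hζ : |ζ t| ≤ 1 / 100) (hα : 0 ≤ α t) (hs : α t ^ 2 + β t ^ 2 ≤ 3 / 2) :
    (1 - 3.1 * η) * α t ≤ α (t + 1) := by
  rw [h.alpha_succ]
  exact mul_le_mul_of_nonneg_right (one_sub_le_alphaFactor hη hs hζ) hα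

lemma stateEvo.beta_succ_ge (h : stateEvo η α β ζ ρ) (hη : 0 ≤ η) {t : ℕ}
    (hρ : |ρ t| ≤ 1 / 100) (hβ : 0 ≤ β t) (hs : α t ^ 2 + β t ^ 2 ≤ 3 / 2) :
    (1 - 5.1 * η) * β t ≤ β (t + 1) := by
  rw [h.beta_succ]
  exact mul_le_mul_of_nonneg_right (one_sub_le_betaFactor hη hs hρ) hβ

end Evolution

lemma initial_bounds {n : ℕ} {a b : ℝ} (hlog : 100 ≤ log n) (hlog' : log n / √n ≤ 1 / 2)
    (ha₀ : 1 / √(n * log n) ≤ a) (ha : a ≤ log n / √n) (hb₀ : 1 - 1 / log n ≤ b)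
    (hb : b ≤ 1 + 1 / log n) : 0 < a ∧ 0 < b ∧ a ^ 2 + b ^ 2 ≤ 3 / 2 := by
  have hn : 1 < (n : ℝ) := (log_pos_iff (Nat.cast_nonneg n)).1 (by linarith)
  have hL : 1 / log n ≤ 1 / 100 := one_div_le_one_div_of_le (by norm_num) hlog
  have ha' : 0 < a :=
    lt_of_lt_of_le (one_div_pos.2 (sqrt_pos.2 (mul_pos (by linarith) (by linarith)))) ha₀
  have hb' : 0 < b := by linarith
  exact ⟨ha', hb', by nlinarith⟩

end PR

end

/-- **Fact 3 (Stage 1.2).** Between `T₁ = min{t : α_{t+1} > c₄}` and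
`T₂ = min{t : α_{t+1}/β_{t+1} > 2/γ}`, one has `α_t² + β_t² ≤ 2`, the ratio `α_t/β_t` grows at
rate at least `1 + η`, the two components decay at rate at most `1 − 3.1η` resp. `1 − 5.1η`,
and `T₂ − T₁ ≲ 1/η`. -/
theorem fact_stage_1_2 :
    ∃ γ₀ > (0 : ℝ), ∀ γ : ℝ, 0 < γ → γ ≤ γ₀ →
      ∃ c₄₀ > (0 : ℝ), ∀ c₄ : ℝ, 0 < c₄ → c₄ ≤ c₄₀ →
        ∃ c₃ > (0 : ℝ), ∃ η₀ > (0 : ℝ), ∃ N : ℕ, ∃ K > (0 : ℝ),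
          ∀ (n m : ℕ), N ≤ n → N ≤ m →
            ∀ η : ℝ, 0 < η → η ≤ η₀ →
              ∀ α β ζ ρ : ℕ → ℝ, PR.stateEvo η α β ζ ρ →
                (∀ t : ℕ, max |ζ t| |ρ t| ≤ c₃ / Real.log n) →
                1 / Real.sqrt (n * Real.log n) ≤ α 0 →
                α 0 ≤ Real.log n / Real.sqrt n →
                1 - 1 / Real.log n ≤ β 0 → β 0 ≤ 1 + 1 / Real.log n →
                ∀ T₁ T₂ : ℕ,
                  IsLeast {t : ℕ | α (t + 1) > c₄} T₁ →
                  IsLeast {t : ℕ | α (t + 1) / β (t + 1) > 2 / γ} T₂ →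
                  (∀ t : ℕ, T₁ < t → t ≤ T₂ →
                    α t ^ 2 + β t ^ 2 ≤ 2 ∧
                    (α (t + 1) / β (t + 1)) / (α t / β t) ≥ 1 + η ∧
                    α (t + 1) ≥ (1 - 3.1 * η) * α t ∧
                    β (t + 1) ≥ (1 - 5.1 * η) * β t) ∧
                  (T₂ : ℝ) - (T₁ : ℝ) ≤ K / η := by
  refine ⟨1, one_pos, fun γ hγ _ => ⟨1, one_pos, fun c₄ hc₄ _ => ⟨1, one_pos, 1 / 100, by norm_num,
    ?_⟩⟩⟩
  obtain ⟨N, hN⟩ := eventually_atTop.1 eventually_log_bounds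
  refine ⟨N, 2 / γ / (c₄ / 2), div_pos (div_pos two_pos hγ) (half_pos hc₄),
    fun n m hn _ η hη₀ hη α β ζ ρ h hpert hα₀ hα₀' hβ₀ hβ₀' T₁ T₂ hT₁ hT₂ => ?_⟩
  obtain ⟨hlog, hlog'⟩ := hN n hn
  have hpert_small (t : ℕ) : max |ζ t| |ρ t| ≤ 1 / 100 :=
    (hpert t).trans (one_div_le_one_div_of_le (by norm_num) hlog)
  have hζ (t : ℕ) := (le_max_left _ _).trans (hpert_small t)
  have hρ (t : ℕ) := (le_max_right _ _).trans (hpert_small t)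
  obtain ⟨hα₀pos, hβ₀pos, hs₀⟩ := PR.initial_bounds hlog hlog' hα₀ hα₀' hβ₀ hβ₀'
  have hinv := h.invariant hη₀.le hη hζ hρ hα₀pos hβ₀pos hs₀
  have hratio (t : ℕ) : (1 + η) * (α t / β t) ≤ α (t + 1) / β (t + 1) :=
    h.one_add_mul_ratio_le hη₀.le hη (hζ t) (hρ t) (hinv t).1.le (hinv t).2.1 (hinv t).2.2
  refine ⟨fun t _ _ => ?_, ?_⟩
  · obtain ⟨hα, hβ, hs⟩ := hinv t
    exact ⟨by linarith, (le_div_iff₀ (div_pos hα hβ)).2 (hratio t),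
      h.alpha_succ_ge hη₀.le (hζ t) hα.le hs, h.beta_succ_ge hη₀.le (hρ t) hβ.le hs⟩
  · obtain ⟨hα, hβ, hs⟩ := hinv (T₁ + 1)
    refine sub_le_div_of_one_add_mul_le hη₀ (by linarith) (half_pos hc₄) (div_pos two_pos hγ).le
      hratio (div_le_div₀ hα.le hT₁.1.le hβ (by nlinarith)) fun t ht => ?_
    exact not_lt.1 fun hgt => (hT₂.2 hgt).not_gt ht
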